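/- arXiv:1310.2458 — 2 statements merged into one kernel-verified Lean document; each statement's English description precedes it below -/
import Mathlib

section
/- Let Φ assign to every polytope P ⊆ ℝ^d a finite signed Borel measure Φ(P,·) on ℝ^d, and assume Φ is translation covariant (Φ(P+x,A+x) = Φ(P,A) for all x ∈ ℝ^d, all Borel A) and locally determined (Φ(P,A) = Φ(Q,A) whenever there is an open set U ⊆ ℝ^d with P∩U = Q∩U and A ⊆ U). Then for every polytope P the measure Φ(P,·) is concentrated on P; that is, Φ(P,A) = 0 for every Borel set A with A ∩ P = ∅. -/
open MeasureTheory Set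
open scoped RealInnerProductSpace Pointwise Classical

noncomputable section

/-- Euclidean space ℝ^d. -/
abbrev Euc (d : ℕ) := EuclideanSpace ℝ (Fin d)

variable {d : ℕ}

/-- A polytope: the convex hull of a nonempty finite set of points. -/
def IsPolytope (P : Set (Euc d)) : Prop :=
  ∃ S : Finset (Euc d), S.Nonempty ∧ P = convexHull ℝ (S : Set (Euc d))

/-- A face of a polytope: a nonempty extreme convex subset. -/
def IsFace (P F : Set (Euc d)) : Prop :=
  F.Nonempty ∧ Convex ℝ F ∧ IsExtreme ℝ P F

/-- The dimension of a set: the dimension of its affine hull. -/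
def setDim (F : Set (Euc d)) : ℕ := Module.finrank ℝ (affineSpan ℝ F).direction

/-- The collection of `j`-dimensional faces of `P`. -/
def facesOfDim (P : Set (Euc d)) (j : ℕ) : Set (Set (Euc d)) :=
  {F | IsFace P F ∧ setDim F = j}

/-- Translation of a set by a vector. -/
def shiftSet (x : Euc d) (S : Set (Euc d)) : Set (Euc d) := (· + x) '' S

/-- The normal cone `N(P,F)` of `P` at `F`. -/
def normalConeOf (P F : Set (Euc d)) : Set (Euc d) :=
  {u | ∀ y ∈ F, ∀ z ∈ P, ⟪z, u⟫ ≤ ⟪y, u⟫}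

/-- `n(P,F)`: the intersection of the normal cone with the unit sphere. -/
def nPF (P F : Set (Euc d)) : Set (Euc d) :=
  normalConeOf P F ∩ Metric.sphere (0 : Euc d) 1

/-- Spherical polytopes of dimension `d - j - 1`: exactly the sets of the form `n(P,F)`
for a `j`-face `F` of a polytope `P`. -/
def IsSphericalPolytope (d j : ℕ) (p : Set (Euc d)) : Prop :=
  ∃ P F : Set (Euc d), IsPolytope P ∧ F ∈ facesOfDim P j ∧ p = nPF P F

/-- `hr j F A = H^j(F ∩ A)`: restricted `j`-dimensional Hausdorff measure. -/
def hr (j : ℕ) (F A : Set (Euc d)) : ℝ := (μH[(j : ℝ)] (F ∩ A)).toReal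

/-- Measurability of a functional on polytopes, w.r.t. the Borel σ-algebra of the
Hausdorff metric on the space of polytopes. -/
def PolytopeMeasurable (g : Set (Euc d) → ℝ) : Prop :=
  @Measurable {K : TopologicalSpace.NonemptyCompacts (Euc d) // IsPolytope (K : Set (Euc d))} ℝ
    (borel _) _ (fun K => g (K : Set (Euc d)))

/-- Measurability of a function on `(d-j-1)`-dimensional spherical polytopes. -/
def SphMeasurable (d j : ℕ) (f : Set (Euc d) → ℝ) : Prop :=
  @Measurable
    {K : TopologicalSpace.NonemptyCompacts (Euc d) // IsSphericalPolytope d j (K : Set (Euc d))} ℝ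
    (borel _) _ (fun K => f (K : Set (Euc d)))

/-- `Φ` is a local extension of `φ`. -/
structure IsLocalExtension (φ : Set (Euc d) → ℝ) (Φ : Set (Euc d) → Set (Euc d) → ℝ) : Prop where
  meas : ∀ A : Set (Euc d), MeasurableSet A → PolytopeMeasurable (fun P => Φ P A)
  signed_measure : ∀ P : Set (Euc d), IsPolytope P →
    ∃ μ : SignedMeasure (Euc d), ∀ A : Set (Euc d), MeasurableSet A → Φ P A = μ A
  total : ∀ P : Set (Euc d), IsPolytope P → φ P = Φ P univ
  covariant : ∀ P : Set (Euc d), IsPolytope P → ∀ (A : Set (Euc d)) (x : Euc d),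
    Φ (shiftSet x P) (shiftSet x A) = Φ P A
  locally_determined : ∀ P Q : Set (Euc d), IsPolytope P → IsPolytope Q →
    ∀ A U : Set (Euc d), IsOpen U → P ∩ U = Q ∩ U → A ⊆ U → Φ P A = Φ Q A

/-- The `j`-homogeneous kernel built from an associated function `f j`. -/
def kernelJ (f : ℕ → Set (Euc d) → ℝ) (j : ℕ) (P A : Set (Euc d)) : ℝ :=
  ∑ᶠ F ∈ facesOfDim P j, f j (nPF P F) * hr j F A

/-- The full kernel built from associated functions `f 0, …, f (d-1)` and the constant `c`. -/
def kernelFull (f : ℕ → Set (Euc d) → ℝ) (c : ℝ) (P A : Set (Euc d)) : ℝ :=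
  (∑ j ∈ Finset.range d, kernelJ f j P A) + c * (volume (P ∩ A)).toReal

/-- The `j`-homogeneous part of the kernel, `j = 0, …, d`. -/
def kernelHom (f : ℕ → Set (Euc d) → ℝ) (c : ℝ) (j : ℕ) (P A : Set (Euc d)) : ℝ :=
  if j = d then c * (volume (P ∩ A)).toReal else kernelJ f j P A

/-- The associated function in degree `j`, with the convention `f_d = c`. -/
def fAssoc (f : ℕ → Set (Euc d) → ℝ) (c : ℝ) (j : ℕ) : Set (Euc d) → ℝ :=
  if j = d then fun _ => c else f j

/-- Gram matrix of a finite family of vectors. -/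
def gram {n : Type*} [Fintype n] (w : n → Euc d) : Matrix n n ℝ :=
  Matrix.of fun i l => ⟪w i, w l⟫

/-- An orthonormal basis of a subspace, as a family of vectors of the ambient space. -/
def obFam (U : Submodule ℝ (Euc d)) : Fin (Module.finrank ℝ U) → Euc d :=
  fun i => (stdOrthonormalBasis ℝ U i : Euc d)

/-- The determinant `[U,V]` of two subspaces: the square root of the Gram determinant of the
concatenation of orthonormal bases of `U^⊥` and `V^⊥`. -/
def subDet2 (U V : Submodule ℝ (Euc d)) : ℝ :=
  Real.sqrt (Matrix.det (gram (Sum.elim (obFam Uᗮ) (obFam Vᗮ))))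

/-- The determinant `[U_1,…,U_k]` of a family of subspaces. -/
def subDetFam {k : ℕ} (Us : Fin k → Submodule ℝ (Euc d)) : ℝ :=
  Real.sqrt (Matrix.det (gram
    (fun p : (i : Fin k) × Fin (Module.finrank ℝ (Us i)ᗮ) => obFam (Us p.1)ᗮ p.2)))

/-- The direction space of a set (of its affine hull). -/
def dirSpace (F : Set (Euc d)) : Submodule ℝ (Euc d) := (affineSpan ℝ F).direction

/-- The mixed spherical polytope `n(P,Q;F,G)`: the intersection with the unit sphere of the
normal cone of `P ∩ (Q+x)` at `F ∩ (G+x)`, for a translation `x` making the relative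
interiors of `F` and `G + x` meet (for faces in general relative position this does not
depend on the choice of `x`). -/
def nMixed2 (P Q F G : Set (Euc d)) : Set (Euc d) :=
  if h : ∃ x : Euc d, (intrinsicInterior ℝ F ∩ intrinsicInterior ℝ (shiftSet x G)).Nonempty then
    nPF (P ∩ shiftSet h.choose Q) (F ∩ shiftSet h.choose G)
  else ∅

/-- The mixed spherical polytope `n(P_1,…,P_k;F_1,…,F_k)`. -/
def nMixedFam {k : ℕ} (P F : Fin k → Set (Euc d)) : Set (Euc d) :=
  if h : ∃ x : Fin k → Euc d,
      (⋂ i, intrinsicInterior ℝ (shiftSet (x i) (F i))).Nonempty then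
    nPF (⋂ i, shiftSet (h.choose i) (P i)) (⋂ i, shiftSet (h.choose i) (F i))
  else ∅

/-- The mixed measure `Φ^{(j)}_{m, d-m+j}(P,Q; A × B)`. -/
def mixedMeas2 (f : ℕ → Set (Euc d) → ℝ) (c : ℝ) (j m : ℕ)
    (P Q A B : Set (Euc d)) : ℝ :=
  ∑ᶠ F ∈ facesOfDim P m, ∑ᶠ G ∈ facesOfDim Q (d - m + j),
    fAssoc f c j (nMixed2 P Q F G) * subDet2 (dirSpace F) (dirSpace G)
      * hr m F A * hr (d - m + j) G B

/-- The mixed measure `Φ^{(j)}_{m_1,…,m_k}(P_1,…,P_k; A_1 × ⋯ × A_k)`. -/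
def mixedMeasFam (f : ℕ → Set (Euc d) → ℝ) (c : ℝ) (j : ℕ) {k : ℕ}
    (m : Fin k → ℕ) (P A : Fin k → Set (Euc d)) : ℝ :=
  ∑ᶠ F ∈ {F : Fin k → Set (Euc d) | ∀ i, F i ∈ facesOfDim (P i) (m i)},
    fAssoc f c j (nMixedFam P F) * subDetFam (fun i => dirSpace (F i))
      * ∏ i, hr (m i) (F i) (A i)

/-- The `j`-th skeleton measure `H^j_skel(P, A)`. -/
def skel (j : ℕ) (P A : Set (Euc d)) : ℝ := ∑ᶠ F ∈ facesOfDim P j, hr j F A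

/-- κ_i, the volume of the i-dimensional unit ball. -/
def ballVol (i : ℕ) : ℝ := Real.pi ^ ((i : ℝ) / 2) / Real.Gamma (1 + (i : ℝ) / 2)

/-- The rotation group SO(d), as a set of matrices. -/
def SOset (d : ℕ) : Set (Matrix (Fin d) (Fin d) ℝ) :=
  {A | A * A.transpose = 1 ∧ A.det = 1}

/-- Mutual general position of two polytopes. -/
def MutualGenPos (P Q : Set (Euc d)) : Prop :=
  P ∩ Q = ∅ ∨
    ∀ j ≤ d, ∀ F ∈ facesOfDim (P ∩ Q) j,
      ∃ k, j ≤ k ∧ k ≤ d ∧ ∃ G ∈ facesOfDim P k, ∃ H ∈ facesOfDim Q (d + j - k),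
        F = closure (intrinsicInterior ℝ G ∩ intrinsicInterior ℝ H)

/-- Mutual general position of a finite family of polytopes. -/
def MutualGenPosFam {m : ℕ} (P : Fin m → Set (Euc d)) : Prop :=
  ∀ i : Fin m, ∀ J : Finset (Fin m), J.Nonempty → i ∉ J →
    MutualGenPos (P i) (⋂ l ∈ J, P l)

/-- `Q` is a standard representation of `S`: `S` is the union of the polytopes `Q i`,
which are in mutual general position. -/
def IsStandardRep {m : ℕ} (S : Set (Euc d)) (Q : Fin m → Set (Euc d)) : Prop :=
  (∀ i, IsPolytope (Q i)) ∧ MutualGenPosFam Q ∧ S = ⋃ i, Q i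

/-- The inclusion-exclusion sum defining the GP-extension of `Φ`. -/
def gpSum (Φ : Set (Euc d) → Set (Euc d) → ℝ) {m : ℕ}
    (Q : Fin m → Set (Euc d)) (A : Set (Euc d)) : ℝ :=
  ∑ J ∈ Finset.univ.powerset.filter (fun J : Finset (Fin m) => J.Nonempty),
    (-1 : ℝ) ^ (J.card + 1) *
      (if (⋂ i ∈ J, Q i).Nonempty then Φ (⋂ i ∈ J, Q i) A else 0)

/-- A closed halfspace. -/
def halfspace (u : Euc d) (t : ℝ) : Set (Euc d) := {x | ⟪x, u⟫ ≤ t}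

/-- Translation invariance on polytopes. -/
def TranslationInvariant (φ : Set (Euc d) → ℝ) : Prop :=
  ∀ P : Set (Euc d), IsPolytope P → ∀ x : Euc d, φ (shiftSet x P) = φ P

/-- Additivity on polytopes. -/
def AdditiveFunc (φ : Set (Euc d) → ℝ) : Prop :=
  ∀ P Q : Set (Euc d), IsPolytope P → IsPolytope Q → IsPolytope (P ∪ Q) →
    φ (P ∪ Q) + φ (P ∩ Q) = φ P + φ Q

/-- Weak continuity: continuity of `φ` under parallel displacements of the facets. -/
def WeaklyContinuous (φ : Set (Euc d) → ℝ) : Prop :=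
  ∀ (N : ℕ) (u : Fin N → Euc d) (t : Fin N → ℝ), (∀ i, ‖u i‖ = 1) →
    (⋂ i, halfspace (u i) (t i)).Nonempty →
    Bornology.IsBounded (⋂ i, halfspace (u i) (t i)) →
    ContinuousWithinAt (fun s : Fin N → ℝ => φ (⋂ i, halfspace (u i) (s i)))
      {s | (⋂ i, halfspace (u i) (s i)).Nonempty ∧
        Bornology.IsBounded (⋂ i, halfspace (u i) (s i))} t

/-- Standard functional: translation invariant, additive and weakly continuous. -/
def IsStandardFunctional (φ : Set (Euc d) → ℝ) : Prop :=
  TranslationInvariant φ ∧ AdditiveFunc φ ∧ WeaklyContinuous φ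

/-- The cone spanned by a set. -/
def coneOf (p : Set (Euc d)) : Set (Euc d) := {x | ∃ t : ℝ, 0 ≤ t ∧ ∃ y ∈ p, x = t • y}

/-- Simple additivity of a function on `(d-j-1)`-dimensional spherical polytopes. -/
def SimplyAdditive {d : ℕ} (j : ℕ) (f : Set (Euc d) → ℝ) : Prop :=
  ∀ (r : ℕ) (p : Set (Euc d)) (q : Fin r → Set (Euc d)),
    IsSphericalPolytope d j p → (∀ i, IsSphericalPolytope d j (q i)) →
    p = ⋃ i, q i →
    (∀ i l, i ≠ l →
      intrinsicInterior ℝ (coneOf (q i)) ∩ intrinsicInterior ℝ (coneOf (q l)) = ∅) →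
    f p = ∑ i, f (q i)

/-- A polyhedral cone: the positive hull of finitely many vectors. -/
def IsPolyhedralCone (C : Set (Euc d)) : Prop :=
  ∃ S : Finset (Euc d),
    C = {x | ∃ c : Euc d → ℝ, (∀ v ∈ S, 0 ≤ c v) ∧ x = ∑ v ∈ S, c v • v}

/-- The unit cube `[-1/2, 1/2]^d`. -/
def cube (d : ℕ) : Set (Euc d) := {x | ∀ i, |x i| ≤ 1 / 2}

end

/-! If `B` is bounded and disjoint from `P`, then for every translation `t` far enough away,
`P` and `P + t` agree (both are empty) on an open neighbourhood of `B + t`, so local determination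
and covariance give `Φ(P, B + t) = Φ(P, B)`. Infinitely many of these translates of `B` are
pairwise disjoint, so by countable additivity the constant series `∑ Φ(P, B)` converges, which
forces `Φ(P, B) = 0`. An arbitrary Borel set disjoint from `P` is a countable disjoint union of
bounded ones. -/

open Bornology Metric

theorem disjoint_vadd_of_subset_ball {E : Type*} [SeminormedAddCommGroup E] {S T : Set E} {R : ℝ}
    (hS : S ⊆ ball 0 R) (hT : T ⊆ ball 0 R) {t : E} (ht : 2 * R ≤ ‖t‖) :
    Disjoint (t +ᵥ S) T := by
  refine (ball_disjoint_ball (δ := R) (ε := R) (x := t) (y := 0) ?_).mono ?_ hT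
  · simpa [two_mul] using ht
  · simpa using vadd_set_mono (a := t) hS

namespace MeasureTheory.VectorMeasure

variable {E M : Type*} [MeasurableSpace E] [TopologicalSpace M] [T2Space M]

theorem apply_eq_zero_of_forall_isBounded [AddCommMonoid M] [PseudoMetricSpace E]
    [OpensMeasurableSpace E] (μ : VectorMeasure E M) {A : Set E} (hA : MeasurableSet A)
    (h : ∀ B ⊆ A, MeasurableSet B → IsBounded B → μ B = 0) : μ A = 0 := by
  rcases A.eq_empty_or_nonempty with rfl | ⟨x, -⟩
  · exact μ.empty
  set S : ℕ → Set E := fun n => A ∩ ball x n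
  have hS : ∀ n, MeasurableSet (S n) := fun n => hA.inter measurableSet_ball
  have hA_eq : A = ⋃ n, disjointed S n := by
    rw [iUnion_disjointed, ← inter_iUnion, iUnion_ball_nat, inter_univ]
  rw [hA_eq, μ.of_disjoint_iUnion (MeasurableSet.disjointed hS) (disjoint_disjointed S)]
  refine (tsum_congr fun n => h _ ?_ (MeasurableSet.disjointed hS n) ?_).trans tsum_zero
  · exact (disjointed_subset S n).trans inter_subset_left
  · exact isBounded_ball.subset ((disjointed_subset S n).trans inter_subset_right)

theorem apply_eq_zero_of_apply_vadd_eq [NormedAddCommGroup E] [NormedSpace ℝ E] [Nontrivial E]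
    [MeasurableAdd E] [AddCommGroup M] [IsTopologicalAddGroup M]
    (μ : VectorMeasure E M) {B : Set E} (hB : MeasurableSet B) (hBb : IsBounded B) {r : ℝ}
    (h : ∀ t : E, r ≤ ‖t‖ → μ (t +ᵥ B) = μ B) : μ B = 0 := by
  obtain ⟨R, hR, hBR⟩ := hBb.subset_ball_lt 0 0
  -- `c ≥ r` makes every translate below admissible in `h`, `c ≥ 2 * R` makes them disjoint
  set c := max r (2 * R)
  have hc : 2 * R ≤ c := le_max_right r (2 * R)
  obtain ⟨v, hv⟩ := exists_norm_eq E (c := c) (by linarith)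
  set t : ℕ → E := fun n => ((n : ℝ) + 1) • v
  have ht : ∀ n, r ≤ ‖t n‖ := fun n => by
    rw [norm_smul, hv, Real.norm_of_nonneg (by positivity)]
    nlinarith [le_max_left r (2 * R), mul_nonneg (n.cast_nonneg : (0 : ℝ) ≤ n) hR.le]
  have hdisj : Pairwise (Function.onFun Disjoint fun n => t n +ᵥ B) := fun (n m : ℕ) hnm => by
    have hnm' : (1 : ℤ) ≤ |(n : ℤ) - m| :=
      Int.one_le_abs (sub_ne_zero.2 (by exact_mod_cast hnm))
    replace hnm' : (1 : ℝ) ≤ |(n : ℝ) - m| := by exact_mod_cast hnm'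
    have hdist : 2 * R ≤ ‖t n - t m‖ := by
      rw [← sub_smul, add_sub_add_right_eq_sub, norm_smul, hv, Real.norm_eq_abs]
      nlinarith
    rw [Function.onFun, ← add_sub_cancel (t m) (t n), ← vadd_vadd, disjoint_vadd_set]
    exact disjoint_vadd_of_subset_ball hBR hBR hdist
  have hsum := μ.hasSum_of_disjoint_iUnion (fun n => hB.const_vadd (t n)) hdisj
  simp only [h _ (ht _)] at hsum
  exact (summable_const_iff _).1 hsum.summable

end MeasureTheory.VectorMeasure

section Polytope

variable {d : ℕ}

def TranslationCovariant (Φ : Set (Euc d) → Set (Euc d) → ℝ) : Prop :=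
  ∀ P : Set (Euc d), IsPolytope P → ∀ (A : Set (Euc d)) (x : Euc d),
    Φ (shiftSet x P) (shiftSet x A) = Φ P A

def LocallyDetermined (Φ : Set (Euc d) → Set (Euc d) → ℝ) : Prop :=
  ∀ P Q : Set (Euc d), IsPolytope P → IsPolytope Q → ∀ A U : Set (Euc d),
    IsOpen U → P ∩ U = Q ∩ U → A ⊆ U → Φ P A = Φ Q A

theorem shiftSet_eq_vadd (x : Euc d) (S : Set (Euc d)) : shiftSet x S = x +ᵥ S := by
  simp only [shiftSet, ← image_vadd, vadd_eq_add, add_comm]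

theorem IsPolytope.isCompact {P : Set (Euc d)} (hP : IsPolytope P) : IsCompact P := by
  obtain ⟨S, -, rfl⟩ := hP
  exact S.finite_toSet.isCompact_convexHull (𝕜 := ℝ)

theorem IsPolytope.vadd {P : Set (Euc d)} (hP : IsPolytope P) (x : Euc d) :
    IsPolytope (x +ᵥ P) := by
  obtain ⟨S, hS, rfl⟩ := hP
  refine ⟨S.image (x +ᵥ ·), hS.image _, ?_⟩
  rw [Finset.coe_image, image_vadd, convexHull_vadd]

theorem LocallyDetermined.apply_vadd_eq_of_disjoint {Φ : Set (Euc d) → Set (Euc d) → ℝ}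
    (hloc : LocallyDetermined Φ) (hcov : TranslationCovariant Φ) {P B : Set (Euc d)}
    (hP : IsPolytope P) (hB : IsBounded B) (hBP : Disjoint B P) :
    ∃ r, ∀ t : Euc d, r ≤ ‖t‖ → Φ P (t +ᵥ B) = Φ P B := by
  obtain ⟨R, hPBR⟩ := (hP.isCompact.isBounded.union hB).subset_ball 0
  refine ⟨2 * R, fun t ht => ?_⟩
  set U := t +ᵥ (Pᶜ ∩ ball 0 R)
  have hU : IsOpen U := (hP.isCompact.isClosed.isOpen_compl.inter isOpen_ball).vadd t
  have hPU : P ∩ U = ∅ := (disjoint_vadd_of_subset_ball inter_subset_right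
    (subset_union_left.trans hPBR) ht).symm.inter_eq
  have htPU : (t +ᵥ P) ∩ U = ∅ := by
    rw [← vadd_set_inter, ← inter_assoc, inter_compl_self, empty_inter, vadd_set_empty]
  have hBU : t +ᵥ B ⊆ U :=
    vadd_set_mono (subset_inter hBP.subset_compl_right (subset_union_right.trans hPBR))
  calc Φ P (t +ᵥ B) = Φ (t +ᵥ P) (t +ᵥ B) :=
        hloc P _ hP (hP.vadd t) _ U hU (hPU.trans htPU.symm) hBU
    _ = Φ P B := by simpa only [shiftSet_eq_vadd] using hcov P hP B t

end Polytope

/-- a translation covariant, locally determined measure-valued functional on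
polytopes is concentrated on the polytope. -/
theorem stmt_1 {d : ℕ} (hd : 1 ≤ d) (Φ : Set (Euc d) → Set (Euc d) → ℝ)
    (hsm : ∀ P : Set (Euc d), IsPolytope P →
      ∃ μ : MeasureTheory.SignedMeasure (Euc d), ∀ A : Set (Euc d), MeasurableSet A → Φ P A = μ A)
    (hcov : ∀ P : Set (Euc d), IsPolytope P → ∀ (A : Set (Euc d)) (x : Euc d),
      Φ (shiftSet x P) (shiftSet x A) = Φ P A)
    (hloc : ∀ P Q : Set (Euc d), IsPolytope P → IsPolytope Q → ∀ A U : Set (Euc d),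
      IsOpen U → P ∩ U = Q ∩ U → A ⊆ U → Φ P A = Φ Q A)
    (P : Set (Euc d)) (hP : IsPolytope P) (A : Set (Euc d)) (hA : MeasurableSet A)
    (hAP : A ∩ P = ∅) :
    Φ P A = 0 := by
  have : Nontrivial (Euc d) := by
    have : Nonempty (Fin d) := ⟨⟨0, hd⟩⟩
    infer_instance
  obtain ⟨μ, hμ⟩ := hsm P hP
  rw [hμ A hA]
  refine μ.apply_eq_zero_of_forall_isBounded hA fun B hBA hB hBb => ?_
  have hBP : Disjoint B P := disjoint_of_subset_left hBA (disjoint_iff_inter_eq_empty.2 hAP)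
  obtain ⟨r, hr⟩ := LocallyDetermined.apply_vadd_eq_of_disjoint hloc hcov hP hBb hBP
  refine μ.apply_eq_zero_of_apply_vadd_eq hB hBb (r := r) fun t ht => ?_
  rw [← hμ _ hB, ← hμ _ (hB.const_vadd t), hr t ht]
end

section
/- Let j ∈ {0,…,d−1} and let C ⊆ ℝ^d be a pointed polyhedral cone of dimension d−j, i.e. C is the positive hull of finitely many vectors, C ∩ (−C) = {0}, and the linear span of C has dimension d−j. Then there exists a polytope P contained in the cube W = [−1/2,1/2]^d having a j-face F with N(P,F) = C; in particular, every (d−j−1)-dimensional spherical polytope p arises as p = n(P,F) for some polytope P and some j-face F of P. (One may take P = P̃ ∩ W and F = (span C)^⊥ ∩ W, where P̃ is the intersection of all closed halfspaces with 0 on their boundary and outer normal in C.) -/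
open MeasureTheory Set
open scoped RealInnerProductSpace Pointwise Classical

/-!
Let `C` be generated by the finite set `S` and let `P̃ = {x | ⟪x, v⟫ ≤ 0 for all v ∈ S}`. Then
`P = P̃ ∩ W` is a bounded polyhedron, hence a polytope: an extreme point is determined by the set
of constraints active at it, so there are finitely many, and Krein–Milman applies.
`F = (span C)ᗮ ∩ W` is the face of `P` on which `⟪·, ∑ v⟫` vanishes, and it has dimension
`d - (d - j) = j` because `W` is a neighbourhood of `0`. For the same reason a normal vector of `P`
at `0 ∈ F` is nonpositive on all of `P̃`, so `N(P, F)` is the polar of `P̃`, which is `C` by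
Farkas' lemma. Farkas' lemma needs `C` to be closed; by the conic Carathéodory theorem `C` is a
finite union of cones over linearly independent sets, each a linear image of an orthant.
-/

namespace PointedCone

variable {E : Type*} [AddCommGroup E] [Module ℝ E]

lemma mem_hull_finset_iff {S : Finset E} {x : E} :
    x ∈ hull ℝ (S : Set E) ↔ ∃ c : E → ℝ, (∀ v ∈ S, 0 ≤ c v) ∧ x = ∑ v ∈ S, c v • v := by
  constructor
  · rw [mem_hull_set]
    rintro ⟨c, hcS, hc, rfl⟩
    exact ⟨c, fun v _ => hc v, Finsupp.sum_of_support_subset c hcS _ fun _ _ => zero_smul ℝ _⟩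
  · rintro ⟨c, hc, rfl⟩
    exact Submodule.sum_mem _ fun v hv => smul_mem _ (hc v hv) (subset_hull hv)

lemma mem_hull_erase_of_not_linearIndepOn {S : Finset E} {x : E}
    (hS : ¬LinearIndepOn ℝ id (S : Set E)) (hx : x ∈ hull ℝ (S : Set E)) :
    ∃ w ∈ S, x ∈ hull ℝ (S.erase w : Set E) := by
  obtain ⟨c, hc, rfl⟩ := mem_hull_finset_iff.mp hx
  obtain ⟨g, hg, hgpos⟩ : ∃ g : E → ℝ, ∑ v ∈ S, g v • v = 0 ∧ ∃ v ∈ S, 0 < g v := by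
    obtain ⟨g, hg, v, hv, hgv⟩ := not_linearIndepOn_finset_iff.mp hS
    rcases hgv.lt_or_gt with h | h
    · refine ⟨-g, ?_, v, hv, neg_pos.mpr h⟩
      simpa [neg_smul, Finset.sum_neg_distrib] using hg
    · exact ⟨g, by simpa using hg, v, hv, h⟩
  -- `r` is the largest multiple of the relation `g` that can be subtracted from `c`
  -- keeping all coefficients nonnegative; it kills the coefficient of `w`.
  obtain ⟨w, hw, hmin⟩ := (S.filter (0 < g ·)).exists_min_image (fun v => c v / g v)
    (by simpa [Finset.Nonempty] using hgpos)
  rw [Finset.mem_filter] at hw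
  set r := c w / g w
  have hr : 0 ≤ r := div_nonneg (hc w hw.1) hw.2.le
  refine ⟨w, hw.1, mem_hull_finset_iff.mpr ⟨fun v => c v - r * g v, fun v hv => ?_, ?_⟩⟩
  · rcases lt_or_ge 0 (g v) with hv' | hv'
    · have := hmin v (Finset.mem_filter.mpr ⟨Finset.mem_of_mem_erase hv, hv'⟩)
      rw [le_div_iff₀ hv'] at this
      linarith
    · nlinarith [hc v (Finset.mem_of_mem_erase hv)]
  · have hcw : c w - r * g w = 0 := by rw [div_mul_cancel₀ _ hw.2.ne', sub_self]
    rw [Finset.sum_erase S (by simp only [hcw, zero_smul])]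
    simp only [sub_smul, Finset.sum_sub_distrib, mul_smul, ← Finset.smul_sum, hg, smul_zero,
      sub_zero]

lemma span_hull (s : Set E) : Submodule.span ℝ (hull ℝ s : Set E) = Submodule.span ℝ s :=
  le_antisymm (Submodule.span_le.mpr (hull_le_span ℝ s)) (Submodule.span_mono subset_hull)

theorem exists_linearIndepOn_of_mem_hull {S : Finset E} {x : E} (hx : x ∈ hull ℝ (S : Set E)) :
    ∃ T ⊆ S, LinearIndepOn ℝ id (T : Set E) ∧ x ∈ hull ℝ (T : Set E) := by
  induction S using Finset.strongInduction with
  | H S ih =>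
    by_cases hS : LinearIndepOn ℝ id (S : Set E)
    · exact ⟨S, subset_rfl, hS, hx⟩
    obtain ⟨w, hw, hxw⟩ := mem_hull_erase_of_not_linearIndepOn hS hx
    obtain ⟨T, hT, hTli, hxT⟩ := ih _ (Finset.erase_ssubset hw) hxw
    exact ⟨T, hT.trans (S.erase_subset w), hTli, hxT⟩

variable [TopologicalSpace E] [IsTopologicalAddGroup E] [ContinuousSMul ℝ E] [T2Space E]

lemma isClosed_hull_of_linearIndepOn {T : Finset E} (hT : LinearIndepOn ℝ id (T : Set E)) :
    IsClosed (hull ℝ (T : Set E) : Set E) := by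
  let φ := Fintype.linearCombination ℝ ((↑) : T → E)
  have hφ : LinearMap.ker φ = ⊥ :=
    LinearMap.ker_eq_bot.mpr hT.fintypeLinearCombination_injective
  have himage : (hull ℝ (T : Set E) : Set E) = φ '' Set.Ici 0 := by
    ext x
    constructor
    · intro hx
      obtain ⟨c, hc, rfl⟩ := mem_hull_finset_iff.mp hx
      exact ⟨fun v => c v, fun v => hc v v.2, by
        simp [φ, Fintype.linearCombination_apply, Finset.sum_attach T fun v => c v • v]⟩
    · rintro ⟨c, hc, rfl⟩
      exact Submodule.sum_mem _ fun v _ => smul_mem _ (hc v) (subset_hull v.2)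
  rw [himage]
  exact (LinearMap.isClosedEmbedding_of_injective hφ).isClosedMap _ isClosed_Ici

theorem isClosed_hull_finset (S : Finset E) : IsClosed (hull ℝ (S : Set E) : Set E) := by
  have hunion : (hull ℝ (S : Set E) : Set E) =
      ⋃ T ∈ S.powerset.filter (fun T : Finset E => LinearIndepOn ℝ id (T : Set E)),
        hull ℝ (T : Set E) := by
    ext x
    simp only [Set.mem_iUnion, Finset.mem_filter, Finset.mem_powerset, exists_prop,
      SetLike.mem_coe]
    refine ⟨fun hx => ?_, fun ⟨T, ⟨hTS, _⟩, hxT⟩ =>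
      Submodule.span_mono (Finset.coe_subset.mpr hTS) hxT⟩
    obtain ⟨T, hTS, hT, hxT⟩ := exists_linearIndepOn_of_mem_hull hx
    exact ⟨T, ⟨hTS, hT⟩, hxT⟩
  rw [hunion]
  exact isClosed_biUnion_finset fun T hT =>
    isClosed_hull_of_linearIndepOn (Finset.mem_filter.mp hT).2

end PointedCone

section Polar

variable {E : Type*} [NormedAddCommGroup E] [InnerProductSpace ℝ E]

def polarCone (s : Set E) : Set E := {z | ∀ v ∈ s, ⟪z, v⟫ ≤ 0}

lemma smul_mem_polarCone {s : Set E} {z : E} (hz : z ∈ polarCone s) {a : ℝ} (ha : 0 ≤ a) :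
    a • z ∈ polarCone s := fun v hv => by
  rw [real_inner_smul_left]
  exact mul_nonpos_of_nonneg_of_nonpos ha (hz v hv)

theorem mem_hull_finset_iff_forall_polarCone [CompleteSpace E] {S : Finset E} {u : E} :
    u ∈ PointedCone.hull ℝ (S : Set E) ↔ ∀ z ∈ polarCone (S : Set E), ⟪z, u⟫ ≤ 0 := by
  constructor
  · intro hu z hz
    obtain ⟨c, hc, rfl⟩ := PointedCone.mem_hull_finset_iff.mp hu
    rw [inner_sum]
    refine Finset.sum_nonpos fun v hv => ?_
    rw [real_inner_smul_right]
    exact mul_nonpos_of_nonneg_of_nonpos (hc v hv) (hz v hv)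
  · intro h
    by_contra hu
    let K : ProperCone ℝ E :=
      ⟨PointedCone.hull ℝ (S : Set E), PointedCone.isClosed_hull_finset S⟩
    obtain ⟨y, hyK, hyu⟩ := K.hyperplane_separation' hu
    have := h (-y) fun v hv => by
      simpa [inner_neg_left, real_inner_comm] using hyK v (PointedCone.subset_hull hv)
    rw [inner_neg_left, real_inner_comm] at this
    linarith

end Polar

section Polyhedron

open Filter Topology

variable {d : ℕ}

def IsPolyhedron (P : Set (Euc d)) : Prop :=
  ∃ H : Finset (Euc d × ℝ), P = {x | ∀ p ∈ H, ⟪x, p.1⟫ ≤ p.2}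

lemma IsPolyhedron.inter {P Q : Set (Euc d)} (hP : IsPolyhedron P) (hQ : IsPolyhedron Q) :
    IsPolyhedron (P ∩ Q) := by
  obtain ⟨H, rfl⟩ := hP
  obtain ⟨H', rfl⟩ := hQ
  refine ⟨H ∪ H', ?_⟩
  ext x
  simp only [Set.mem_inter_iff, Set.mem_ofPred_eq, Finset.mem_union, or_imp, forall_and]

lemma IsPolyhedron.convex {P : Set (Euc d)} (hP : IsPolyhedron P) : Convex ℝ P := by
  obtain ⟨H, rfl⟩ := hP
  intro x hx y hy a b ha hb hab p hp
  have hxp := hx p hp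
  have hyp := hy p hp
  rw [inner_add_left, real_inner_smul_left, real_inner_smul_left]
  calc a * ⟪x, p.1⟫ + b * ⟪y, p.1⟫ ≤ a * p.2 + b * p.2 := by gcongr
    _ = p.2 := by rw [← add_mul, hab, one_mul]

lemma eq_of_mem_extremePoints_of_active_subset {H : Finset (Euc d × ℝ)} {x y : Euc d}
    (hx : x ∈ {z | ∀ p ∈ H, ⟪z, p.1⟫ ≤ p.2}.extremePoints ℝ)
    (hy : y ∈ {z | ∀ p ∈ H, ⟪z, p.1⟫ ≤ p.2})
    (hxy : ∀ p ∈ H, ⟪x, p.1⟫ = p.2 → ⟪y, p.1⟫ = p.2) : y = x := by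
  -- Moving from `x` away from `y` keeps the constraints inactive at `x` strict for a short
  -- time, and keeps those active at `x` because they are active at `y` too.
  have hnear : ∀ᶠ s in 𝓝 (0 : ℝ), ∀ p ∈ H, ⟪x, p.1⟫ < p.2 → ⟪x + s • (x - y), p.1⟫ < p.2 := by
    rw [eventually_all_finset]
    intro p _
    by_cases h : ⟪x, p.1⟫ < p.2
    · have hc : Continuous fun s : ℝ => ⟪x + s • (x - y), p.1⟫ := by fun_prop
      filter_upwards [hc.continuousAt.eventually_lt continuousAt_const (by simpa using h)]
        with s hs _ using hs
    · exact Eventually.of_forall fun _ h' => absurd h' h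
  obtain ⟨s, hs, hs0 : 0 < s⟩ := ((hnear.filter_mono nhdsWithin_le_nhds).and
    (self_mem_nhdsWithin : Set.Ioi (0 : ℝ) ∈ 𝓝[>] 0)).exists
  have hz : x + s • (x - y) ∈ {z | ∀ p ∈ H, ⟪z, p.1⟫ ≤ p.2} := by
    intro p hp
    rcases (hx.1 p hp).lt_or_eq with h | h
    · exact (hs p hp h).le
    · rw [inner_add_left, real_inner_smul_left, inner_sub_left, h, hxy p hp h]
      simp
  have hseg : x ∈ openSegment ℝ y (x + s • (x - y)) := by
    refine ⟨s / (1 + s), 1 / (1 + s), by positivity, by positivity, by field_simp; ring, ?_⟩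
    match_scalars <;> field_simp
    ring
  exact hx.2 hy hz hseg

lemma IsPolyhedron.isClosed {P : Set (Euc d)} (hP : IsPolyhedron P) : IsClosed P := by
  obtain ⟨H, rfl⟩ := hP
  simp only [Set.ofPred_forall]
  exact isClosed_iInter fun p => isClosed_iInter fun _ => isClosed_le (by fun_prop) continuous_const

lemma IsPolyhedron.finite_extremePoints {P : Set (Euc d)} (hP : IsPolyhedron P) :
    (P.extremePoints ℝ).Finite := by
  obtain ⟨H, rfl⟩ := hP
  let active : Euc d → Finset (Euc d × ℝ) := fun x => H.filter fun p => ⟪x, p.1⟫ = p.2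
  refine Set.Finite.of_finite_image (f := active) (H.powerset.finite_toSet.subset ?_) ?_
  · rintro _ ⟨x, -, rfl⟩
    exact Finset.mem_powerset.mpr (Finset.filter_subset _ _)
  · intro x hx y hy hxy
    refine (eq_of_mem_extremePoints_of_active_subset hx hy.1 fun p hp hpx => ?_).symm
    have : p ∈ active y := hxy ▸ Finset.mem_filter.mpr ⟨hp, hpx⟩
    exact (Finset.mem_filter.mp this).2

lemma IsPolyhedron.isPolytope {P : Set (Euc d)} (hP : IsPolyhedron P) (hc : IsCompact P)
    (hne : P.Nonempty) : IsPolytope P := by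
  have hfin := hP.finite_extremePoints
  refine ⟨hfin.toFinset, by simpa using hc.extremePoints_nonempty hne, ?_⟩
  rw [hfin.coe_toFinset, ← (hfin.isClosed_convexHull ℝ).closure_eq,
    closure_convexHull_extremePoints hc hP.convex]

lemma isPolyhedron_polarCone (S : Finset (Euc d)) : IsPolyhedron (polarCone (S : Set (Euc d))) :=
  ⟨S.image fun v => (v, 0), by ext; simp [polarCone]⟩

lemma isPolyhedron_cube : IsPolyhedron (cube d) := by
  refine ⟨(Finset.univ.image fun i => (EuclideanSpace.single i 1, 1 / 2)) ∪
    (Finset.univ.image fun i => (-EuclideanSpace.single i 1, 1 / 2)), ?_⟩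
  ext x
  simp only [cube, Finset.mem_union, Finset.mem_image, Finset.mem_univ, true_and, or_imp,
    forall_and, forall_exists_index, Set.mem_ofPred_eq]
  simp [EuclideanSpace.inner_single_right, abs_le, forall_and, neg_le, and_comm]

lemma isCompact_cube : IsCompact (cube d) := by
  have hcube : cube d =
      EuclideanSpace.equiv (Fin d) ℝ ⁻¹' Set.univ.pi fun _ => Set.Icc (-1 / 2) (1 / 2) := by
    ext x
    simp only [cube, Set.mem_ofPred_eq, Set.mem_preimage, Set.mem_univ_pi, Set.mem_Icc, abs_le,
      neg_div]
    rfl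
  rw [hcube]
  exact (EuclideanSpace.equiv (Fin d) ℝ).toHomeomorph.isCompact_preimage.mpr
    (isCompact_univ_pi fun _ => isCompact_Icc)

lemma cube_mem_nhds_zero : cube d ∈ 𝓝 0 :=
  Filter.mem_of_superset (Metric.closedBall_mem_nhds 0 (by norm_num)) fun x hx i =>
    (Real.norm_eq_abs (x i) ▸ PiLp.norm_apply_le x i).trans (mem_closedBall_zero_iff.mp hx)

end Polyhedron

section Construction

open Filter Topology

lemma exists_pos_smul_mem_of_mem_nhds {E : Type*} [AddCommGroup E] [TopologicalSpace E]
    [Module ℝ E] [ContinuousSMul ℝ E] {K : Set E} (hK : K ∈ 𝓝 (0 : E)) (z : E) :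
    ∃ ε : ℝ, 0 < ε ∧ ε • z ∈ K := by
  have : Tendsto (fun ε : ℝ => ε • z) (𝓝[>] 0) (𝓝 0) := by
    simpa using ((tendsto_id (x := 𝓝 (0 : ℝ))).smul_const z).mono_left nhdsWithin_le_nhds
  obtain ⟨ε, hεK, hε⟩ := ((this.eventually hK).and self_mem_nhdsWithin).exists
  exact ⟨ε, hε, hεK⟩

lemma Submodule.span_inter_of_mem_nhds {E : Type*} [AddCommGroup E] [TopologicalSpace E]
    [Module ℝ E] [ContinuousSMul ℝ E] (V : Submodule ℝ E) {K : Set E} (hK : K ∈ 𝓝 (0 : E)) :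
    span ℝ ((V : Set E) ∩ K) = V := by
  refine le_antisymm (span_le.mpr Set.inter_subset_left) fun w hw => ?_
  obtain ⟨ε, hε, hεw⟩ := exists_pos_smul_mem_of_mem_nhds hK w
  have := (span ℝ ((V : Set E) ∩ K)).smul_mem ε⁻¹
    (subset_span (show ε • w ∈ (V : Set E) ∩ K from ⟨V.smul_mem ε hw, hεw⟩))
  rwa [inv_smul_smul₀ hε.ne'] at this

variable {E : Type*} [NormedAddCommGroup E] [InnerProductSpace ℝ E]

lemma Submodule.mem_orthogonal_span_iff {s : Set E} {z : E} :
    z ∈ (span ℝ s)ᗮ ↔ ∀ v ∈ s, ⟪v, z⟫ = 0 := by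
  rw [mem_orthogonal]
  refine ⟨fun h v hv => h v (subset_span hv), fun h u hu => ?_⟩
  induction hu using span_induction with
  | mem v hv => exact h v hv
  | zero => exact inner_zero_left _
  | add a b _ _ ha hb => rw [inner_add_left, ha, hb, add_zero]
  | smul a b _ hb => rw [real_inner_smul_left, hb, mul_zero]

lemma inner_sum_nonpos_of_mem_polarCone {S : Finset E} {z : E} (hz : z ∈ polarCone (S : Set E)) :
    ⟪z, ∑ v ∈ S, v⟫ ≤ 0 := by
  rw [inner_sum]
  exact Finset.sum_nonpos hz

lemma orthogonal_span_eq_setOf_mem_polarCone {S : Finset E} :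
    ((Submodule.span ℝ (S : Set E))ᗮ : Set E) =
      {z | z ∈ polarCone (S : Set E) ∧ ⟪z, ∑ v ∈ S, v⟫ = 0} := by
  ext z
  simp only [SetLike.mem_coe, Submodule.mem_orthogonal_span_iff, Set.mem_ofPred_eq, inner_sum]
  constructor
  · intro h
    refine ⟨fun v hv => (real_inner_comm v z ▸ h v hv).le, Finset.sum_eq_zero fun v hv => ?_⟩
    rw [real_inner_comm, h v hv]
  · rintro ⟨hz, hsum⟩ v hv
    rw [real_inner_comm]
    exact (Finset.sum_eq_zero_iff_of_nonpos hz).mp hsum v hv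

lemma isExtreme_setOf_inner_eq_zero {A : Set E} {w : E} (h : ∀ z ∈ A, ⟪z, w⟫ ≤ 0) :
    IsExtreme ℝ A {z | z ∈ A ∧ ⟪z, w⟫ = 0} := by
  refine ⟨fun z hz => hz.1, fun x₁ hx₁ x₂ hx₂ x hx hseg => ?_⟩
  obtain ⟨a, b, ha, hb, -, rfl⟩ := hseg
  have h₁ := h x₁ hx₁
  have h₂ := h x₂ hx₂
  have hsum : a * ⟪x₁, w⟫ + b * ⟪x₂, w⟫ = 0 := by
    simpa [inner_add_left, real_inner_smul_left] using hx.2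
  exact ⟨hx₁, by nlinarith⟩

variable {d : ℕ}

lemma IsPolyhedralCone.exists_eq_hull {C : Set (Euc d)} (hC : IsPolyhedralCone C) :
    ∃ S : Finset (Euc d), C = PointedCone.hull ℝ (S : Set (Euc d)) := by
  obtain ⟨S, rfl⟩ := hC
  exact ⟨S, by ext; simp [PointedCone.mem_hull_finset_iff]⟩

lemma isPolytope_polarCone_inter_cube (S : Finset (Euc d)) :
    IsPolytope (polarCone (S : Set (Euc d)) ∩ cube d) :=
  ((isPolyhedron_polarCone S).inter isPolyhedron_cube).isPolytope
    (isCompact_cube.inter_left (isPolyhedron_polarCone S).isClosed)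
    ⟨0, fun v _ => (inner_zero_left v).le, mem_of_mem_nhds cube_mem_nhds_zero⟩

lemma isFace_orthogonal_inter_cube (S : Finset (Euc d)) :
    IsFace (polarCone (S : Set (Euc d)) ∩ cube d)
      ((Submodule.span ℝ (S : Set (Euc d)))ᗮ ∩ cube d) := by
  refine ⟨⟨0, Submodule.zero_mem _, mem_of_mem_nhds cube_mem_nhds_zero⟩,
    (Submodule.convex _).inter isPolyhedron_cube.convex, ?_⟩
  have hF : ((Submodule.span ℝ (S : Set (Euc d)))ᗮ : Set (Euc d)) ∩ cube d =
      {z | z ∈ polarCone (S : Set (Euc d)) ∩ cube d ∧ ⟪z, ∑ v ∈ S, v⟫ = 0} := by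
    rw [orthogonal_span_eq_setOf_mem_polarCone]
    ext z
    simp only [Set.mem_inter_iff, Set.mem_ofPred_eq]
    tauto
  rw [hF]
  exact isExtreme_setOf_inner_eq_zero fun z hz => inner_sum_nonpos_of_mem_polarCone hz.1

lemma setDim_orthogonal_inter_cube (V : Submodule ℝ (Euc d)) :
    setDim ((Vᗮ : Set (Euc d)) ∩ cube d) = d - Module.finrank ℝ V := by
  have h0 : (0 : Euc d) ∈ (Vᗮ : Set (Euc d)) ∩ cube d :=
    ⟨Submodule.zero_mem _, mem_of_mem_nhds cube_mem_nhds_zero⟩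
  have hspan : vectorSpan ℝ ((Vᗮ : Set (Euc d)) ∩ cube d) = Vᗮ := by
    rw [vectorSpan_eq_span_vsub_set_right ℝ h0]
    simp only [vsub_eq_sub, sub_zero, Set.image_id']
    exact Submodule.span_inter_of_mem_nhds _ cube_mem_nhds_zero
  have hrank := V.finrank_add_finrank_orthogonal
  rw [finrank_euclideanSpace_fin] at hrank
  rw [setDim, direction_affineSpan, hspan]
  omega

lemma normalConeOf_polarCone_inter_cube (S : Finset (Euc d)) :
    normalConeOf (polarCone (S : Set (Euc d)) ∩ cube d)
      ((Submodule.span ℝ (S : Set (Euc d)))ᗮ ∩ cube d) = PointedCone.hull ℝ (S : Set (Euc d)) := by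
  have h0 : (0 : Euc d) ∈ cube d := mem_of_mem_nhds cube_mem_nhds_zero
  ext u
  rw [SetLike.mem_coe]
  constructor
  · refine fun hu => mem_hull_finset_iff_forall_polarCone.mpr fun z hz => ?_
    -- `polarCone S` is a cone, and the cube is a neighbourhood of `0 ∈ F`
    obtain ⟨ε, hε, hεz⟩ := exists_pos_smul_mem_of_mem_nhds cube_mem_nhds_zero z
    have := hu 0 ⟨Submodule.zero_mem _, h0⟩ (ε • z) ⟨smul_mem_polarCone hz hε.le, hεz⟩
    rw [inner_zero_left, real_inner_smul_left] at this
    exact nonpos_of_mul_nonpos_right this hε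
  · intro hu y hy z hz
    rw [Submodule.inner_left_of_mem_orthogonal (PointedCone.hull_le_span ℝ _ hu) hy.1]
    exact mem_hull_finset_iff_forall_polarCone.mp hu z hz.1

end Construction

theorem stmt_3_general {d : ℕ} (j : ℕ) (hj : j < d) (C : Set (Euc d))
    (hC : IsPolyhedralCone C)
    (hdim : Module.finrank ℝ (Submodule.span ℝ C) = d - j) :
    ∃ P F : Set (Euc d), IsPolytope P ∧ P ⊆ cube d ∧ F ∈ facesOfDim P j ∧
      normalConeOf P F = C ∧ nPF P F = C ∩ Metric.sphere (0 : Euc d) 1 := by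
  obtain ⟨S, rfl⟩ := hC.exists_eq_hull
  have hN := normalConeOf_polarCone_inter_cube S
  refine ⟨_, _, isPolytope_polarCone_inter_cube S, Set.inter_subset_right,
    ⟨isFace_orthogonal_inter_cube S, ?_⟩, hN, by rw [nPF, hN]⟩
  rw [setDim_orthogonal_inter_cube, ← PointedCone.span_hull, hdim]
  omega

/-- every pointed polyhedral cone of dimension `d - j` is the normal cone of a
`j`-face of a polytope contained in the unit cube; in particular every `(d-j-1)`-dimensional
spherical polytope arises as `n(P,F)`. -/
theorem stmt_3 {d : ℕ} (hd : 1 ≤ d) (j : ℕ) (hj : j < d) (C : Set (Euc d))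
    (hC : IsPolyhedralCone C) (hpointed : C ∩ (-C) = {0})
    (hdim : Module.finrank ℝ (Submodule.span ℝ C) = d - j) :
    ∃ P F : Set (Euc d), IsPolytope P ∧ P ⊆ cube d ∧ F ∈ facesOfDim P j ∧
      normalConeOf P F = C ∧ nPF P F = C ∩ Metric.sphere (0 : Euc d) 1 :=
  stmt_3_general j hj C hC hdim
end
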